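/- Let Q ∈ ℝ^{P×d}, K ∈ ℝ^{N×d} with rows kᵢ, α ≥ 0, β > 0. Define the energy E(Q; K) = (α/2) trace(KKᵀ) − ∑_{i=1}^N lse(Q kᵢᵀ, β). Then ∇_K E(Q; K) = αK − softmax₂(β K Qᵀ) Q, where softmax₂ applies softmax along each row of the N×P matrix β K Qᵀ. -/

import Mathlib

/-!
The quadratic term contributes `α K`. For a row `kᵢ`, the chain rule through `log ∘ ∑ exp`
gives the derivative of `lse(Q kᵢᵀ, β)` as the softmax-weighted average of the rows of `Q`:
the factor `β` produced by the inner derivative cancels the prefactor `β⁻¹`.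
-/

noncomputable def softmax {σ : Type*} [Fintype σ] (v : σ → ℝ) (j : σ) : ℝ :=
  Real.exp (v j) / ∑ j', Real.exp (v j')

-- An empty index set is allowed: the function is then the constant `β⁻¹ * log 0 = 0`.
theorem HasFDerivAt.logSumExp {E σ : Type*} [NormedAddCommGroup E] [NormedSpace ℝ E]
    [Fintype σ] {f : E → σ → ℝ} {f' : σ → E →L[ℝ] ℝ} {x : E} {β : ℝ} (hβ : β ≠ 0)
    (hf : ∀ j, HasFDerivAt (fun y => f y j) (f' j) x) :
    HasFDerivAt (fun y => β⁻¹ * Real.log (∑ j, Real.exp (β * f y j)))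
      (∑ j, softmax (fun j => β * f x j) j • f' j) x := by
  rcases isEmpty_or_nonempty σ with _ | _
  · simpa using hasFDerivAt_const (0 : ℝ) x
  have hS : 0 < ∑ j, Real.exp (β * f x j) :=
    Finset.sum_pos (fun j _ => Real.exp_pos _) Finset.univ_nonempty
  refine (((HasFDerivAt.fun_sum fun j _ => ((hf j).const_mul β).exp).log hS.ne').const_mul
    β⁻¹).congr_fderiv ?_
  simp only [Finset.smul_sum, smul_smul, softmax]
  refine Finset.sum_congr rfl fun j _ => ?_
  congr 1
  field_simp

section Entries

variable {ι κ : Type*}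

def entry (i : ι) (k : κ) : (ι → κ → ℝ) →L[ℝ] ℝ :=
  (ContinuousLinearMap.proj k).comp
    (ContinuousLinearMap.proj (R := ℝ) (φ := fun _ : ι => κ → ℝ) i)

@[simp]
theorem entry_apply (i : ι) (k : κ) (M : ι → κ → ℝ) : entry i k M = M i k :=
  rfl

theorem hasFDerivAt_sum_sq [Fintype ι] [Fintype κ] (K : ι → κ → ℝ) :
    HasFDerivAt (fun M : ι → κ → ℝ => ∑ i, ∑ k, M i k ^ 2)
      (∑ i, ∑ k, (2 * K i k) • entry i k) K := by
  refine HasFDerivAt.fun_sum fun i _ => HasFDerivAt.fun_sum fun k _ => ?_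
  refine ((entry i k).hasFDerivAt.pow 2).congr_fderiv ?_
  norm_num

theorem hasFDerivAt_sum_mul_entry [Fintype ι] [Fintype κ] {σ : Type*} (Q : σ → κ → ℝ)
    (i : ι) (j : σ) (K : ι → κ → ℝ) :
    HasFDerivAt (fun M : ι → κ → ℝ => ∑ m, Q j m * M i m) (∑ m, Q j m • entry i m) K :=
  HasFDerivAt.fun_sum fun m _ => (entry i m).hasFDerivAt.const_mul (Q j m)

end Entries

theorem grad_conditional_energy_general (P N d : ℕ) (α β : ℝ) (hβ : 0 < β)
    (Q : Fin P → Fin d → ℝ) (K : Fin N → Fin d → ℝ) :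
    DifferentiableAt ℝ
      (fun M : Fin N → Fin d → ℝ =>
        (α / 2) * (∑ i, ∑ j, M i j ^ 2) -
          ∑ i, β⁻¹ * Real.log (∑ j, Real.exp (β * ∑ m, Q j m * M i m))) K ∧
    ∀ H : Fin N → Fin d → ℝ,
      fderiv ℝ
        (fun M : Fin N → Fin d → ℝ =>
          (α / 2) * (∑ i, ∑ j, M i j ^ 2) -
            ∑ i, β⁻¹ * Real.log (∑ j, Real.exp (β * ∑ m, Q j m * M i m))) K H =
      ∑ p, ∑ q,
        (α * K p q -
          ∑ j, (Real.exp (β * ∑ m, K p m * Q j m) /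
              ∑ j', Real.exp (β * ∑ m, K p m * Q j' m)) * Q j q) * H p q := by
  have hE := ((hasFDerivAt_sum_sq K).const_mul (α / 2)).fun_sub
    (HasFDerivAt.fun_sum fun i (_ : i ∈ Finset.univ) =>
      HasFDerivAt.logSumExp hβ.ne' fun j => hasFDerivAt_sum_mul_entry Q i j K)
  refine ⟨hE.differentiableAt, fun H => ?_⟩
  rw [hE.fderiv]
  simp only [sub_apply, smul_apply, FunLike.coe_sum, Finset.sum_apply, entry_apply,
    smul_eq_mul, softmax, mul_comm (K _ _) (Q _ _), sub_mul, Finset.sum_sub_distrib,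
    Finset.mul_sum, Finset.sum_mul]
  congr 1
  · exact Finset.sum_congr rfl fun p _ => Finset.sum_congr rfl fun q _ => by ring
  · refine Finset.sum_congr rfl fun p _ => ?_
    rw [Finset.sum_comm]
    exact Finset.sum_congr rfl fun q _ => Finset.sum_congr rfl fun j _ => by ring

/-- For `E(Q; K) = (α/2) trace(KKᵀ) − ∑ᵢ lse(Q kᵢᵀ, β)` we have
`∇_K E(Q; K) = α K − softmax₂(β K Qᵀ) Q`, where `softmax₂` applies softmax along each
row of the `N×P` matrix `β K Qᵀ`. -/
theorem grad_conditional_energy (P N d : ℕ) (α β : ℝ) (hα : 0 ≤ α) (hβ : 0 < β)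
    (Q : Fin P → Fin d → ℝ) (K : Fin N → Fin d → ℝ) :
    DifferentiableAt ℝ
      (fun M : Fin N → Fin d → ℝ =>
        (α / 2) * (∑ i, ∑ j, M i j ^ 2) -
          ∑ i, β⁻¹ * Real.log (∑ j, Real.exp (β * ∑ m, Q j m * M i m))) K ∧
    ∀ H : Fin N → Fin d → ℝ,
      fderiv ℝ
        (fun M : Fin N → Fin d → ℝ =>
          (α / 2) * (∑ i, ∑ j, M i j ^ 2) -
            ∑ i, β⁻¹ * Real.log (∑ j, Real.exp (β * ∑ m, Q j m * M i m))) K H =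
      ∑ p, ∑ q,
        (α * K p q -
          ∑ j, (Real.exp (β * ∑ m, K p m * Q j m) /
              ∑ j', Real.exp (β * ∑ m, K p m * Q j' m)) * Q j q) * H p q :=
  grad_conditional_energy_general P N d α β hβ Q K
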